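/- Suppose I is an open interval of real numbers and U is a subgroup of Homeo⁺(I) that acts freely on I (every non-identity element of U has no fixed point in I). Then for every nonempty set S there exists a good U-anonymous S-predictor on I. -/

import Mathlib

/-!
Since `U` acts freely by increasing homeomorphisms of an interval, the intermediate value theorem
shows that every nontrivial element of `U` moves all points in the same direction. Ordered
pointwise, `U` is then a bi-ordered group, and it is Archimedean because the supremum of a bounded
orbit of a positive element would be a fixed point. By Hölder's theorem `U` is abelian.

The predictor looks at the past of `F` before `t`. If this past is invariant under a positive
element `ψ` of `U`, it predicts the periodic continuation `F (ψ⁻¹ t)`; commutativity makes this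
independent of `ψ`, and the prediction is then correct at all earlier times, so this rule errs at
most once. Otherwise it takes, in a fixed well-order of the orbits of functions under
precomposition by `U`, the least orbit containing an extension of the past; as the past is not
periodic, that orbit contains only one such extension, whose value at `t` is the prediction. Each
error of this second rule strictly increases the least orbit, so these errors form a well-ordered,
hence countable, subset of the line. Both rules are invariant under the action of `U`.
-/

open Equiv MeasureTheory Set

lemma exists_pow_le_and_lt_pow_succ {M : Type*} [Monoid M] [LinearOrder M] {a δ : M}
    (ha : 1 ≤ a) (hex : ∃ n : ℕ, a < δ ^ n) : ∃ m : ℕ, δ ^ m ≤ a ∧ a < δ ^ (m + 1) := by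
  classical
  obtain ⟨m, hm⟩ : ∃ m, Nat.find hex = m + 1 :=
    Nat.exists_eq_succ_of_ne_zero fun h0 => (Nat.find_spec hex).not_ge (by rwa [h0, pow_zero])
  exact ⟨m, not_lt.1 (Nat.find_min hex (by omega)), hm ▸ Nat.find_spec hex⟩

section Holder

variable {G : Type*} [Group G] [LinearOrder G] [MulLeftMono G]

lemma exists_one_lt_mul_self_le [MulRightMono G] {c k : G} (hk : 1 < k) (hkc : k < c) :
    ∃ δ, 1 < δ ∧ δ * δ ≤ c := by
  rcases le_or_gt (k * k) c with hkk | hkk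
  · exact ⟨k, hk, hkk⟩
  · -- `c * k⁻¹` lies strictly between `1` and `k`
    refine ⟨c * k⁻¹, lt_mul_inv_iff_lt.2 hkc, ?_⟩
    calc c * k⁻¹ * (c * k⁻¹) ≤ c * k⁻¹ * k :=
          mul_le_mul_right (mul_inv_lt_iff_lt_mul.2 hkk).le _
      _ = c := inv_mul_cancel_right c k

lemma commute_of_isLeast (harch : ∀ a b : G, 1 < b → ∃ n : ℕ, a < b ^ n)
    {e : G} (he : IsLeast {g | 1 < g} e) {a b : G} (ha : 1 ≤ a) (hb : 1 ≤ b) : Commute a b := by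
  have hpow : ∀ a : G, 1 ≤ a → ∃ m : ℕ, a = e ^ m := by
    intro a ha
    obtain ⟨m, hm, hm'⟩ := exists_pow_le_and_lt_pow_succ ha (harch a e he.1)
    refine ⟨m, ?_⟩
    by_contra hne
    have hpos : 1 < (e ^ m)⁻¹ * a := lt_inv_mul_iff_lt.2 (hm.lt_of_ne' hne)
    have hlt : (e ^ m)⁻¹ * a < e := by rwa [inv_mul_lt_iff_lt_mul, ← pow_succ]
    exact hlt.not_ge (he.2 hpos)
  obtain ⟨m, rfl⟩ := hpow a ha
  obtain ⟨n, rfl⟩ := hpow b hb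
  exact Commute.pow_pow_self e m n

lemma mul_mul_inv_lt_of_pow_le [MulRightMono G] {a b δ : G} {m n : ℕ} (ha : δ ^ m ≤ a)
    (ha' : a < δ ^ (m + 1)) (hb : δ ^ n ≤ b) (hb' : b < δ ^ (n + 1)) : a * b * (b * a)⁻¹ < δ * δ :=
  calc a * b * (b * a)⁻¹ < δ ^ (m + 1) * δ ^ (n + 1) * (b * a)⁻¹ :=
        mul_lt_mul_left (mul_lt_mul_of_lt_of_lt ha' hb') _
    _ ≤ δ ^ (m + 1) * δ ^ (n + 1) * (δ ^ n * δ ^ m)⁻¹ :=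
        mul_le_mul_right (inv_le_inv_iff.2 (mul_le_mul' hb ha)) _
    _ = δ * δ := by rw [← sq]; group

lemma commute_of_one_lt [MulRightMono G] (h : ∀ a b : G, 1 < a → 1 < b → Commute a b)
    (a b : G) : Commute a b := by
  have h' : ∀ a b : G, 1 < a → Commute a b := by
    intro a b ha
    rcases lt_trichotomy b 1 with hb | rfl | hb
    · exact Commute.inv_right_iff.1 (h a b⁻¹ ha (one_lt_inv'.2 hb))
    · exact Commute.one_right a
    · exact h a b ha hb
  rcases lt_trichotomy a 1 with ha | rfl | ha
  · exact Commute.inv_left_iff.1 (h' a⁻¹ b (one_lt_inv'.2 ha))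
  · exact Commute.one_left b
  · exact h' a b ha

lemma mul_le_mul_swap_of_one_lt [MulRightMono G]
    (harch : ∀ a b : G, 1 < b → ∃ n : ℕ, a < b ^ n) {a b : G} (ha : 1 < a) (hb : 1 < b) :
    a * b ≤ b * a := by
  by_contra! hlt
  have hc : 1 < a * b * (b * a)⁻¹ := lt_mul_inv_iff_lt.2 hlt
  by_cases hmin : ∃ k, 1 < k ∧ k < a * b * (b * a)⁻¹
  · obtain ⟨k, hk, hkc⟩ := hmin
    obtain ⟨δ, hδ, hδc⟩ := exists_one_lt_mul_self_le hk hkc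
    obtain ⟨m, hm, hm'⟩ := exists_pow_le_and_lt_pow_succ ha.le (harch a δ hδ)
    obtain ⟨n, hn, hn'⟩ := exists_pow_le_and_lt_pow_succ hb.le (harch b δ hδ)
    exact (mul_mul_inv_lt_of_pow_le hm hm' hn hn').not_ge hδc
  · push Not at hmin
    exact hlt.ne (commute_of_isLeast harch ⟨hc, hmin⟩ hb.le ha.le).eq

theorem commute_of_archimedean [MulRightMono G] (harch : ∀ a b : G, 1 < b → ∃ n : ℕ, a < b ^ n)
    (a b : G) : Commute a b :=
  commute_of_one_lt (fun _ _ ha hb => le_antisymm (mul_le_mul_swap_of_one_lt harch ha hb)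
    (mul_le_mul_swap_of_one_lt harch hb ha)) a b

end Holder

theorem Set.IsWF.countable {α : Type*} [LinearOrder α] [TopologicalSpace α] [OrderTopology α]
    [SecondCountableTopology α] {s : Set α} (hs : s.IsWF) : s.Countable := by
  refine (countable_setOfPred_isolated_right_within (s := s)).mono fun x hx => ?_
  refine ⟨hx, ?_⟩
  rcases (s ∩ Ioi x).eq_empty_or_nonempty with h | h
  · rw [h, nhdsWithin_empty]
  · -- the least element of `s` above `x` isolates `x` from the right
    have hwf : (s ∩ Ioi x).IsWF := hs.mono inter_subset_left
    rw [← Filter.empty_mem_iff_bot, mem_nhdsWithin]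
    exact ⟨Iio (hwf.min h), isOpen_Iio, (hwf.min_mem h).2,
      fun z ⟨hz, hzs⟩ => hwf.not_lt_min h hzs hz⟩

namespace Equiv.Perm

variable {α : Type*} [LinearOrder α]

lemma forall_lt_apply_or_forall_apply_lt [TopologicalSpace α] [OrderTopology α]
    [PreconnectedSpace α] {φ : Perm α} (hφ : StrictMono φ) (hfix : ∀ x, φ x ≠ x) :
    (∀ x, x < φ x) ∨ ∀ x, φ x < x := by
  by_contra! h
  obtain ⟨⟨a, ha⟩, ⟨b, hb⟩⟩ := h
  obtain ⟨x, hx⟩ := intermediate_value_univ₂ (hφ.orderIsoOfSurjective φ φ.surjective).continuous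
    continuous_id ha hb
  exact hfix x hx

lemma inv_apply_lt {φ : Perm α} (hφ : ∀ x, x < φ x) (x : α) : φ⁻¹ x < x := by
  simpa using hφ (φ⁻¹ x)

lemma lt_inv_apply {φ : Perm α} (hφ : ∀ x, φ x < x) (x : α) : x < φ⁻¹ x := by
  simpa using hφ (φ⁻¹ x)

lemma exists_lt_pow_apply {β : Type*} [ConditionallyCompleteLinearOrder β] {I : Set β}
    (hI : I.OrdConnected) {h : Perm I} (hh : StrictMono h) (hpos : ∀ x, x < h x) (x y : I) :
    ∃ n : ℕ, y < (h ^ n) x := by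
  by_contra! hle
  have hbdd : BddAbove (range fun n : ℕ => ((h ^ n) x : β)) :=
    ⟨y, forall_mem_range.2 hle⟩
  set c := sSup (range fun n : ℕ => ((h ^ n) x : β))
  have hxc : (x : β) ≤ c := le_csSup hbdd ⟨0, rfl⟩
  have hc : c ∈ I := hI.out x.2 y.2 ⟨hxc, csSup_le (range_nonempty _) (forall_mem_range.2 hle)⟩
  obtain ⟨_, ⟨n, rfl⟩, hn⟩ :=
    exists_lt_of_lt_csSup (range_nonempty _) (inv_apply_lt hpos ⟨c, hc⟩ : h⁻¹ ⟨c, hc⟩ < ⟨c, hc⟩)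
  have hlt : (⟨c, hc⟩ : I) < (h ^ (n + 1)) x := by
    simpa [pow_succ', Perm.mul_apply] using hh (Subtype.coe_lt_coe.1 hn)
  exact hlt.not_ge (le_csSup hbdd ⟨n + 1, rfl⟩)

end Equiv.Perm

namespace Subgroup

section Orbit

variable {α S : Type*} (U : Subgroup (Perm α))

def compOrbit (G : α → S) : Set (α → S) := {H | ∃ φ ∈ U, H = G ∘ φ}

variable {U}

lemma self_mem_compOrbit (G : α → S) : G ∈ U.compOrbit G := ⟨1, U.one_mem, rfl⟩

lemma comp_mem_compOrbit {G H : α → S} {φ : Perm α} (hH : H ∈ U.compOrbit G) (hφ : φ ∈ U) :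
    H ∘ φ ∈ U.compOrbit G := by
  obtain ⟨χ, hχ, rfl⟩ := hH
  exact ⟨χ * φ, U.mul_mem hχ hφ, rfl⟩

lemma compOrbit_comp (G : α → S) {φ : Perm α} (hφ : φ ∈ U) :
    U.compOrbit (G ∘ φ) = U.compOrbit G := by
  ext H
  constructor
  · rintro ⟨χ, hχ, rfl⟩
    exact ⟨φ * χ, U.mul_mem hφ hχ, rfl⟩
  · rintro ⟨χ, hχ, rfl⟩
    exact ⟨φ⁻¹ * χ, U.mul_mem (U.inv_mem hφ) hχ, by ext; simp⟩

end Orbit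

variable {α S : Type*} [LinearOrder α] (U : Subgroup (Perm α))

lemma forall_le_or_forall_le (hsign : ∀ φ ∈ U, φ ≠ 1 → (∀ x, x < φ x) ∨ ∀ x, φ x < x)
    {φ ψ : Perm α} (hφ : φ ∈ U) (hψ : ψ ∈ U) : (∀ x, φ x ≤ ψ x) ∨ ∀ x, ψ x ≤ φ x := by
  rcases eq_or_ne (ψ * φ⁻¹) 1 with h | h
  · exact .inl fun x => (mul_inv_eq_one.1 h ▸ le_rfl)
  rcases hsign _ (mul_mem hψ (inv_mem hφ)) h with h' | h'
  · exact .inl fun x => by simpa using (h' (φ x)).le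
  · exact .inr fun x => by simpa using (h' (φ x)).le

noncomputable abbrev pointwiseLinearOrder
    (hsign : ∀ φ ∈ U, φ ≠ 1 → (∀ x, x < φ x) ∨ ∀ x, φ x < x) : LinearOrder U where
  le φ ψ := ∀ x, (φ : Perm α) x ≤ (ψ : Perm α) x
  le_refl _ _ := le_rfl
  le_trans _ _ _ h h' x := (h x).trans (h' x)
  le_antisymm _ _ h h' := Subtype.ext (Perm.ext fun x => (h x).antisymm (h' x))
  le_total φ ψ := U.forall_le_or_forall_le hsign φ.2 ψ.2
  toDecidableLE := Classical.decRel _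

theorem commute_of_forall_lt_pow_apply (hmono : ∀ φ ∈ U, StrictMono φ)
    (hsign : ∀ φ ∈ U, φ ≠ 1 → (∀ x, x < φ x) ∨ ∀ x, φ x < x)
    (harch : ∀ φ ∈ U, ∀ ψ ∈ U, (∀ x, x < ψ x) → ∀ x, ∃ n : ℕ, φ x < (ψ ^ n) x)
    {φ ψ : Perm α} (hφ : φ ∈ U) (hψ : ψ ∈ U) : Commute φ ψ := by
  let := U.pointwiseLinearOrder hsign
  have : MulLeftMono U := ⟨fun χ _ _ h x => (hmono χ χ.2).monotone (h x)⟩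
  have : MulRightMono U := ⟨fun χ _ _ h x => h ((χ : Perm α) x)⟩
  refine congrArg Subtype.val (commute_of_archimedean (G := U) ?_ ⟨φ, hφ⟩ ⟨ψ, hψ⟩)
  rintro a b ⟨-, hb⟩
  obtain ⟨x, hx⟩ : ∃ x, (1 : Perm α) x < (b : Perm α) x := by simpa using hb
  have hbpos : ∀ x, x < (b : Perm α) x :=
    (hsign b b.2 fun h => by simp [h] at hx).resolve_right fun h => (h x).asymm hx
  obtain ⟨n, hn⟩ := harch a a.2 b b.2 hbpos x
  refine ⟨n, lt_of_not_ge fun h => ?_⟩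
  have := show ∀ y, ((b ^ n : U) : Perm α) y ≤ (a : Perm α) y from h
  exact (this x).not_gt (by simpa using hn)

def IsPeriodBefore (t : α) (F : α → S) (ψ : Perm α) : Prop :=
  ψ ∈ U ∧ (∀ x, x < ψ x) ∧ ∀ x, ψ x < t → F (ψ x) = F x

def compatibleOrbits (t : α) (F : α → S) : Set (Set (α → S)) :=
  {O | ∃ G, O = U.compOrbit G ∧ EqOn G F (Iio t)}

noncomputable def leastCompatibleOrbit (t : α) (F : α → S) : Set (α → S) :=
  WellOrderingRel.isWellOrder.wf.min (U.compatibleOrbits t F) ⟨_, F, rfl, eqOn_refl _ _⟩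

/- The prediction rules as a relation: its invariance under `PastEquiv` is proved by rewriting,
and `Classical.epsilon` then turns it into invariance of `predictor`. -/
def IsPrediction (t : α) (F : α → S) (v : S) : Prop :=
  (∃ ψ, U.IsPeriodBefore t F ψ ∧ v = F (ψ⁻¹ t)) ∨
    (¬(∃ ψ, U.IsPeriodBefore t F ψ) ∧
      ∃ G ∈ U.leastCompatibleOrbit t F, EqOn G F (Iio t) ∧ v = G t)

noncomputable def predictor [Nonempty S] (t : α) (F : α → S) : S :=
  Classical.epsilon (U.IsPrediction t F)

def PastEquiv (t : α) (F : α → S) (t' : α) (F' : α → S) : Prop :=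
  ∃ φ ∈ U, φ t' = t ∧ EqOn F' (F ∘ φ) (Iio t')

variable {U}

lemma mem_leastCompatibleOrbit (t : α) (F : α → S) :
    U.leastCompatibleOrbit t F ∈ U.compatibleOrbits t F :=
  WellFounded.min_mem _ _ _

lemma comp_mem_leastCompatibleOrbit {t : α} {F G : α → S} {φ : Perm α}
    (hG : G ∈ U.leastCompatibleOrbit t F) (hφ : φ ∈ U) : G ∘ φ ∈ U.leastCompatibleOrbit t F := by
  obtain ⟨G₀, hW, -⟩ := mem_leastCompatibleOrbit (U := U) t F
  rw [hW] at hG ⊢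
  exact comp_mem_compOrbit hG hφ

lemma exists_isPrediction (t : α) (F : α → S) : ∃ v, U.IsPrediction t F v := by
  by_cases hper : ∃ ψ, U.IsPeriodBefore t F ψ
  · obtain ⟨ψ, hψ⟩ := hper
    exact ⟨_, .inl ⟨ψ, hψ, rfl⟩⟩
  · obtain ⟨G, hO, hG⟩ := mem_leastCompatibleOrbit (U := U) t F
    exact ⟨_, .inr ⟨hper, G, hO ▸ self_mem_compOrbit G, hG, rfl⟩⟩

lemma isPrediction_predictor [Nonempty S] (t : α) (F : α → S) :
    U.IsPrediction t F (U.predictor t F) :=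
  Classical.epsilon_spec (exists_isPrediction t F)

namespace PastEquiv

variable {t t' : α} {F F' : α → S}

lemma symm (hmono : ∀ φ ∈ U, StrictMono φ) (h : U.PastEquiv t F t' F') :
    U.PastEquiv t' F' t F := by
  obtain ⟨φ, hφ, rfl, hF⟩ := h
  refine ⟨φ⁻¹, U.inv_mem hφ, by simp, fun x hx => ?_⟩
  have : φ⁻¹ x < t' := by simpa using (hmono _ (U.inv_mem hφ)) (mem_Iio.1 hx)
  simpa using (hF this).symm

lemma exists_isPeriodBefore (hmono : ∀ φ ∈ U, StrictMono φ) (h : U.PastEquiv t F t' F')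
    {ψ : Perm α} (hψ : U.IsPeriodBefore t F ψ) :
    ∃ ψ', U.IsPeriodBefore t' F' ψ' ∧ F (ψ⁻¹ t) = F' (ψ'⁻¹ t') := by
  obtain ⟨φ, hφ, rfl, hF⟩ := h
  obtain ⟨hψU, hψpos, hψF⟩ := hψ
  have hφm := hmono φ hφ
  have hpos : ∀ x, x < (φ⁻¹ * ψ * φ) x := fun x =>
    hφm.lt_iff_lt.1 (by simpa using hψpos (φ x))
  refine ⟨φ⁻¹ * ψ * φ, ⟨U.mul_mem (U.mul_mem (U.inv_mem hφ) hψU) hφ, hpos, fun x hx => ?_⟩, ?_⟩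
  · have hx' : ψ (φ x) < φ t' := by simpa using hφm hx
    rw [hF hx, hF ((hpos x).trans hx)]
    simpa using hψF (φ x) hx'
  · rw [hF (Perm.inv_apply_lt hpos t')]
    simp [mul_inv_rev]

lemma compatibleOrbits_subset (hmono : ∀ φ ∈ U, StrictMono φ) (h : U.PastEquiv t F t' F') :
    U.compatibleOrbits t F ⊆ U.compatibleOrbits t' F' := by
  obtain ⟨φ, hφ, rfl, hF⟩ := h
  rintro O ⟨G, rfl, hG⟩
  exact ⟨G ∘ φ, (compOrbit_comp G hφ).symm,
    fun x hx => (hG (hmono φ hφ hx)).trans (hF hx).symm⟩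

lemma leastCompatibleOrbit_eq (hmono : ∀ φ ∈ U, StrictMono φ) (h : U.PastEquiv t F t' F') :
    U.leastCompatibleOrbit t F = U.leastCompatibleOrbit t' F' := by
  unfold leastCompatibleOrbit
  congr 1
  exact (h.compatibleOrbits_subset hmono).antisymm ((h.symm hmono).compatibleOrbits_subset hmono)

lemma isPrediction (hmono : ∀ φ ∈ U, StrictMono φ) (h : U.PastEquiv t F t' F') {v : S}
    (hv : U.IsPrediction t F v) : U.IsPrediction t' F' v := by
  rcases hv with ⟨ψ, hψ, rfl⟩ | ⟨hnone, G, hG, hGF, rfl⟩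
  · obtain ⟨ψ', hψ', hval⟩ := h.exists_isPeriodBefore hmono hψ
    exact .inl ⟨ψ', hψ', hval⟩
  · refine .inr ⟨fun ⟨ψ', hψ'⟩ => hnone ?_, ?_⟩
    · obtain ⟨ψ, hψ, -⟩ := (h.symm hmono).exists_isPeriodBefore hmono hψ'
      exact ⟨ψ, hψ⟩
    · have hW := h.leastCompatibleOrbit_eq hmono
      obtain ⟨φ, hφ, rfl, hF⟩ := h
      exact ⟨G ∘ φ, hW ▸ comp_mem_leastCompatibleOrbit hG hφ,
        fun x hx => (hGF (hmono φ hφ hx)).trans (hF hx).symm, rfl⟩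

lemma predictor_eq [Nonempty S] (hmono : ∀ φ ∈ U, StrictMono φ) (h : U.PastEquiv t F t' F') :
    U.predictor t F = U.predictor t' F' :=
  congrArg Classical.epsilon <| funext fun _ =>
    propext ⟨h.isPrediction hmono, (h.symm hmono).isPrediction hmono⟩

end PastEquiv

namespace IsPeriodBefore

variable {t : α} {F : α → S} {ψ : Perm α}

lemma mono {t'' : α} (hψ : U.IsPeriodBefore t'' F ψ) (ht : t ≤ t'') : U.IsPeriodBefore t F ψ :=
  ⟨hψ.1, hψ.2.1, fun x hx => hψ.2.2 x (hx.trans_le ht)⟩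

lemma apply_inv_eq {t'' : α} (hψ : U.IsPeriodBefore t'' F ψ) (ht : t < t'') :
    F (ψ⁻¹ t) = F t := by
  simpa using (hψ.2.2 (ψ⁻¹ t) (by simpa using ht)).symm

lemma apply_inv_eq_of_commute {ψ' : Perm α} (hψ : U.IsPeriodBefore t F ψ)
    (hψ' : U.IsPeriodBefore t F ψ') (hc : Commute ψ ψ') : F (ψ⁻¹ t) = F (ψ'⁻¹ t) := by
  -- both values equal `F y` for `y = ψ⁻¹ ψ'⁻¹ t`
  have hy : ψ' (ψ⁻¹ (ψ'⁻¹ t)) = ψ⁻¹ t := by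
    rw [← Perm.mul_apply, ← hc.inv_left.eq]
    simp
  have h₁ := hψ'.2.2 (ψ⁻¹ (ψ'⁻¹ t)) (hy ▸ Perm.inv_apply_lt hψ.2.1 t)
  have h₂ : F (ψ'⁻¹ t) = F (ψ⁻¹ (ψ'⁻¹ t)) := by
    simpa using hψ.2.2 (ψ⁻¹ (ψ'⁻¹ t)) (by simpa using Perm.inv_apply_lt hψ'.2.1 t)
  rw [← hy, h₁, h₂]

end IsPeriodBefore

lemma IsPrediction.eq_of_isPeriodBefore (hcomm : ∀ φ ∈ U, ∀ ψ ∈ U, Commute φ ψ) {t : α}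
    {F : α → S} {v : S} {ψ : Perm α} (hv : U.IsPrediction t F v)
    (hψ : U.IsPeriodBefore t F ψ) : v = F (ψ⁻¹ t) := by
  rcases hv with ⟨ψ', hψ', rfl⟩ | ⟨hnone, -⟩
  · exact hψ'.apply_inv_eq_of_commute hψ (hcomm _ hψ'.1 _ hψ.1)
  · exact (hnone ⟨ψ, hψ⟩).elim

lemma predictor_eq_of_isPeriodBefore [Nonempty S] (hcomm : ∀ φ ∈ U, ∀ ψ ∈ U, Commute φ ψ)
    {t t'' : α} {F : α → S} {ψ : Perm α} (hψ : U.IsPeriodBefore t'' F ψ) (ht : t < t'') :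
    U.predictor t F = F t :=
  ((isPrediction_predictor t F).eq_of_isPeriodBefore hcomm (hψ.mono ht.le)).trans
    (hψ.apply_inv_eq ht)

lemma eq_one_of_eqOn_comp (hsign : ∀ φ ∈ U, φ ≠ 1 → (∀ x, x < φ x) ∨ ∀ x, φ x < x)
    {t : α} {F G : α → S} {χ : Perm α} (hχ : χ ∈ U) (hnone : ¬∃ ψ, U.IsPeriodBefore t F ψ)
    (hG : EqOn G F (Iio t)) (hGχ : EqOn (G ∘ χ) F (Iio t)) : χ = 1 := by
  by_contra hne
  rcases hsign χ hχ hne with hpos | hneg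
  · refine hnone ⟨χ, hχ, hpos, fun x hx => ?_⟩
    rw [← hG hx, ← hGχ ((hpos x).trans hx)]
    rfl
  · refine hnone ⟨χ⁻¹, U.inv_mem hχ, Perm.lt_inv_apply hneg, fun x hx => ?_⟩
    rw [← hGχ hx]
    simpa using hG ((Perm.lt_inv_apply hneg x).trans hx)

lemma compatibleOrbits_antitone {t t'' : α} (F : α → S) (ht : t ≤ t'') :
    U.compatibleOrbits t'' F ⊆ U.compatibleOrbits t F := by
  rintro O ⟨G, rfl, hG⟩
  exact ⟨G, rfl, hG.mono (Iio_subset_Iio ht)⟩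

lemma not_leastCompatibleOrbit_lt {t t'' : α} (F : α → S) (ht : t ≤ t'') :
    ¬WellOrderingRel (U.leastCompatibleOrbit t'' F) (U.leastCompatibleOrbit t F) :=
  WellOrderingRel.isWellOrder.wf.not_lt_min _
    (compatibleOrbits_antitone F ht (mem_leastCompatibleOrbit t'' F))

lemma leastCompatibleOrbit_ne [Nonempty S]
    (hsign : ∀ φ ∈ U, φ ≠ 1 → (∀ x, x < φ x) ∨ ∀ x, φ x < x) {t t'' : α} {F : α → S}
    (ht : t < t'') (hnone : ¬∃ ψ, U.IsPeriodBefore t F ψ) (herr : U.predictor t F ≠ F t) :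
    U.leastCompatibleOrbit t F ≠ U.leastCompatibleOrbit t'' F := by
  intro hW
  obtain ⟨ψ, hψ, -⟩ | ⟨-, G, hG, hGF, hval⟩ := isPrediction_predictor (U := U) t F
  · exact hnone ⟨ψ, hψ⟩
  obtain ⟨G'', hW'', hG''F⟩ := mem_leastCompatibleOrbit (U := U) t'' F
  rw [hW, hW''] at hG
  obtain ⟨χ, hχ, rfl⟩ := hG
  obtain rfl := eq_one_of_eqOn_comp hsign hχ hnone (hG''F.mono (Iio_subset_Iio ht.le)) hGF
  exact herr (hval.trans (hG''F ht))

theorem isWF_setOf_predictor_ne [Nonempty S]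
    (hsign : ∀ φ ∈ U, φ ≠ 1 → (∀ x, x < φ x) ∨ ∀ x, φ x < x) (F : α → S) :
    {t | U.predictor t F ≠ F t ∧ ¬∃ ψ, U.IsPeriodBefore t F ψ}.IsWF := by
  refine (InvImage.wf (U.leastCompatibleOrbit · F)
    WellOrderingRel.isWellOrder.wf).wellFoundedOn.mono' fun a ha _ _ hab => ?_
  exact (trichotomous_of WellOrderingRel _ _).resolve_right <| not_or_intro
    (leastCompatibleOrbit_ne hsign hab ha.2 ha.1) (not_leastCompatibleOrbit_lt F hab.le)

theorem countable_setOf_predictor_ne [TopologicalSpace α] [OrderTopology α]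
    [SecondCountableTopology α] [Nonempty S]
    (hsign : ∀ φ ∈ U, φ ≠ 1 → (∀ x, x < φ x) ∨ ∀ x, φ x < x)
    (hcomm : ∀ φ ∈ U, ∀ ψ ∈ U, Commute φ ψ) (F : α → S) :
    {t | U.predictor t F ≠ F t}.Countable := by
  have hperiodic : {t | U.predictor t F ≠ F t ∧ ∃ ψ, U.IsPeriodBefore t F ψ}.Subsingleton := by
    rintro a ⟨ha, ψa, hψa⟩ b ⟨hb, ψb, hψb⟩
    by_contra hne
    rcases lt_or_gt_of_ne hne with h | h
    · exact ha (predictor_eq_of_isPeriodBefore hcomm hψb h)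
    · exact hb (predictor_eq_of_isPeriodBefore hcomm hψa h)
  refine (hperiodic.countable.union (isWF_setOf_predictor_ne hsign F).countable).mono
    fun t ht => ?_
  by_cases h : ∃ ψ, U.IsPeriodBefore t F ψ
  exacts [.inl ⟨ht, h⟩, .inr ⟨ht, h⟩]

end Subgroup

theorem stmt_4_general (I : Set ℝ) (hIconn : I.OrdConnected)
    (U : Subgroup (Equiv.Perm I))
    (hmono : ∀ φ ∈ U, StrictMono (⇑φ))
    (hfree : ∀ φ ∈ U, φ ≠ 1 → ∀ x : I, φ x ≠ x)
    (S : Type*) [Nonempty S] :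
    ∃ P : I → (I → S) → S,
      (∀ (t : I) (F G : I → S), (∀ x : I, x < t → F x = G x) → P t F = P t G) ∧
      (∀ F : I → S,
        volume {t : ℝ | ∃ ht : t ∈ I, P ⟨t, ht⟩ F ≠ F ⟨t, ht⟩} = 0) ∧
      (∀ φ ∈ U, ∀ (t : I) (F : I → S), P t F = P (φ⁻¹ t) (F ∘ φ)) := by
  have := hIconn
  have : PreconnectedSpace I := Subtype.preconnectedSpace hIconn.isPreconnected
  have hsign : ∀ φ ∈ U, φ ≠ 1 → (∀ x, x < φ x) ∨ ∀ x, φ x < x := fun φ hφ h1 =>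
    Perm.forall_lt_apply_or_forall_apply_lt (hmono φ hφ) (hfree φ hφ h1)
  have hcomm : ∀ φ ∈ U, ∀ ψ ∈ U, Commute φ ψ := fun φ hφ ψ hψ =>
    U.commute_of_forall_lt_pow_apply hmono hsign
      (fun _ _ ψ hψ hpos x => Perm.exists_lt_pow_apply hIconn (hmono ψ hψ) hpos x _) hφ hψ
  refine ⟨U.predictor, fun t F G h => ?_, fun F => ?_, fun φ hφ t F => ?_⟩
  · exact Subgroup.PastEquiv.predictor_eq hmono ⟨1, U.one_mem, rfl, fun x hx => (h x hx).symm⟩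
  · have hset : {t : ℝ | ∃ ht : t ∈ I, U.predictor ⟨t, ht⟩ F ≠ F ⟨t, ht⟩} =
        Subtype.val '' {t | U.predictor t F ≠ F t} := by
      ext; simp
    rw [hset]
    exact ((U.countable_setOf_predictor_ne hsign hcomm F).image _).measure_zero _
  · exact Subgroup.PastEquiv.predictor_eq hmono ⟨φ, hφ, by simp, fun _ _ => rfl⟩

/-- If `I` is an open interval of reals (open, order-connected, nonempty subset of `ℝ`) and
`U` is a subgroup of `Homeo⁺(I)` acting freely on `I` (no non-identity element has a fixed
point), then for every (nonempty) set `S` there is a good, `U`-anonymous `S`-predictor on `I`.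
Increasing homeomorphisms of `I` are modelled as strictly monotone permutations of `I`.
A predictor is encoded as `P : I → (I → S) → S`, where `P t F` is the prediction from `F`
restricted to `{x ∈ I : x < t}` (so `P t` depends only on those values). -/
theorem stmt_4 (I : Set ℝ) (hIopen : IsOpen I) (hIconn : I.OrdConnected) (hIne : I.Nonempty)
    (U : Subgroup (Equiv.Perm I))
    (hmono : ∀ φ ∈ U, StrictMono (⇑φ))
    (hfree : ∀ φ ∈ U, φ ≠ 1 → ∀ x : I, φ x ≠ x)
    (S : Type*) [Nonempty S] :
    ∃ P : I → (I → S) → S,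
      (∀ (t : I) (F G : I → S), (∀ x : I, x < t → F x = G x) → P t F = P t G) ∧
      (∀ F : I → S,
        volume {t : ℝ | ∃ ht : t ∈ I, P ⟨t, ht⟩ F ≠ F ⟨t, ht⟩} = 0) ∧
      (∀ φ ∈ U, ∀ (t : I) (F : I → S), P t F = P (φ⁻¹ t) (F ∘ φ)) :=
  stmt_4_general I hIconn U hmono hfree S
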